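/- For every u ∈ ℂ, all three roots (with multiplicity) of the cubic R_u have modulus 1 if and only if u ∈ 𝕌. -/

import Mathlib

/-- The cubic encoding the stationary points of the NV phase at positive energy. -/
noncomputable def Rcubic (u ζ : ℂ) : ℂ :=
  ζ ^ 3 - ((starRingEnd ℂ u) / 6) * ζ ^ 2 + (u / 6) * ζ - 1

/-- The region `𝕌` enclosed by the curve `𝒰`. -/
def regionU : Set ℂ :=
  {w : ℂ | ∃ s : ℝ, s ∈ Set.Icc (0 : ℝ) 1 ∧ ∃ φ : ℝ,
    w = 6 * (s : ℂ) * (2 * Complex.exp (-(Complex.I * (φ : ℂ))) + Complex.exp (2 * Complex.I * (φ : ℂ)))}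

/-!
Write `w = u / 6`. The cubic `ζ³ - conj w ζ² + w ζ - 1` has the real discriminant
`Δ(w) = |w|⁴ - 8 Re w³ + 18 |w|² - 27`.

If the roots are unimodular with product `1`, each one's conjugate is the product of the other
two, which makes `∏ (zᵢ - zⱼ)` purely imaginary, so `Δ(w) ≤ 0`. Conversely, the cubic always has
a unimodular root `q²` (intermediate values of an antiperiodic function on the circle); the
other two roots are `conj q * x` with `x² - r x + 1 = 0` for a real `r`, and
`Δ(w) = (2 Re q³ - r)² (r² - 4)`, so `Δ(w) ≤ 0` gives `|r| ≤ 2` and unimodular roots.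

Finally `𝕌` is the filled deltoid `N(φ) = 2 e^{-iφ} + e^{2iφ}`: the deltoid meets every ray from
the origin, `Δ` vanishes on it (a double root), and along a ray
`Δ(s N) = (s - 1) (s (|N|² s - 9)² + 27 (s - 1)²)`, which is `≤ 0` exactly when `s ≤ 1`.
-/

open Complex ComplexConjugate Set
open scoped Real

theorem cubic_eq_prod_iff {K : Type*} [Field K] [CharZero K] (A B C α β γ : K) :
    (∀ ζ, ζ ^ 3 - A * ζ ^ 2 + B * ζ - C = (ζ - α) * (ζ - β) * (ζ - γ)) ↔
      α + β + γ = A ∧ α * β + α * γ + β * γ = B ∧ α * β * γ = C := by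
  constructor
  · intro h
    have h₀ := h 0
    have h₁ := h 1
    have h₂ := h (-1)
    exact ⟨by linear_combination (h₁ + h₂) / 2 - h₀, by linear_combination (h₂ - h₁) / 2,
      by linear_combination h₀⟩
  · rintro ⟨h₁, h₂, h₃⟩ ζ
    linear_combination ζ ^ 2 * h₁ - ζ * h₂ + h₃

theorem exists_eq_zero_of_antiperiodic {f : ℝ → ℝ} {c : ℝ} (hf : Continuous f)
    (h : Function.Antiperiodic f c) : ∃ t, f t = 0 := by
  have h0 : (0 : ℝ) ∈ uIcc (f 0) (f c) := by
    rw [← zero_add c, h 0, mem_uIcc]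
    rcases le_total (f 0) 0 with hf0 | hf0
    · exact Or.inl ⟨hf0, by linarith⟩
    · exact Or.inr ⟨by linarith, hf0⟩
  obtain ⟨t, -, ht⟩ := intermediate_value_uIcc hf.continuousOn h0
  exact ⟨t, ht⟩

theorem exists_norm_eq_one_add_eq_mul_eq_one {r : ℝ} (hr : |r| ≤ 2) :
    ∃ x y : ℂ, ‖x‖ = 1 ∧ ‖y‖ = 1 ∧ x + y = r ∧ x * y = 1 := by
  set θ := Real.arccos (r / 2)
  have hcos : 2 * Real.cos θ = r := by
    rw [Real.cos_arccos] <;> [ring; linarith [abs_le.1 hr]; linarith [abs_le.1 hr]]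
  refine ⟨exp (θ * I), exp ((-θ : ℝ) * I), norm_exp_ofReal_mul_I _, norm_exp_ofReal_mul_I _,
    ?_, ?_⟩
  · rw [← hcos]
    push_cast
    rw [two_cos]
  · rw [← exp_add]
    push_cast
    ring_nf
    exact exp_zero

/-- The discriminant of `ζ ^ 3 - conj w * ζ ^ 2 + w * ζ - 1`. -/
noncomputable def cubicDisc (w : ℂ) : ℝ :=
  normSq w ^ 2 - 8 * (w ^ 3).re + 18 * normSq w - 27

theorem ofReal_cubicDisc (w : ℂ) :
    (cubicDisc w : ℂ) =
      (w * conj w) ^ 2 - 4 * (w ^ 3 + conj w ^ 3) + 18 * (w * conj w) - 27 := by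
  have hre : ((w ^ 3).re : ℂ) = (w ^ 3 + conj w ^ 3) / 2 := by
    rw [← map_pow, add_conj]
    push_cast
    ring
  simp only [cubicDisc]
  push_cast
  rw [← mul_conj, hre]
  ring

theorem ofReal_cubicDisc_eq_sq {w α β γ : ℂ} (h₁ : α + β + γ = conj w)
    (h₂ : α * β + α * γ + β * γ = w) (h₃ : α * β * γ = 1) :
    (cubicDisc w : ℂ) = ((α - β) * (α - γ) * (β - γ)) ^ 2 := by
  rw [ofReal_cubicDisc, ← h₁, ← h₂]
  linear_combination (4 * (α + β + γ) ^ 3 - 18 * (α + β + γ) * (α * β + α * γ + β * γ)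
      + 27 * (α * β * γ + 1)) * h₃

theorem cubicDisc_nonpos_of_norm_eq_one {w α β γ : ℂ} (hα : ‖α‖ = 1) (hβ : ‖β‖ = 1)
    (hγ : ‖γ‖ = 1) (h₁ : α + β + γ = conj w) (h₂ : α * β + α * γ + β * γ = w)
    (h₃ : α * β * γ = 1) : cubicDisc w ≤ 0 := by
  have conj_eq {z : ℂ} (hz : ‖z‖ = 1) (y : ℂ) (h : z * y = 1) : conj z = y := by
    rw [← inv_eq_conj hz, inv_eq_of_mul_eq_one_right h]
  have hα' := conj_eq hα (β * γ) (by linear_combination h₃)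
  have hβ' := conj_eq hβ (α * γ) (by linear_combination h₃)
  have hγ' := conj_eq hγ (α * β) (by linear_combination h₃)
  set D := (α - β) * (α - γ) * (β - γ)
  -- `conj D = -α β γ D = -D`
  have hD : (cubicDisc w : ℂ) = ((-normSq D : ℝ) : ℂ) := by
    rw [ofReal_cubicDisc_eq_sq h₁ h₂ h₃, ofReal_neg, ← mul_conj]
    simp only [D, map_mul, map_sub, hα', hβ', hγ']
    linear_combination -((α - β) * (α - γ) * (β - γ)) ^ 2 * h₃
  rw [ofReal_inj] at hD
  rw [hD, neg_nonpos]
  exact normSq_nonneg D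

/-- `q ^ 2` is then a root of `ζ ^ 3 - conj w * ζ ^ 2 + w * ζ - 1`. -/
theorem exists_norm_eq_one_im_eq_zero (w : ℂ) :
    ∃ q : ℂ, ‖q‖ = 1 ∧ (conj w * q - q ^ 3).im = 0 := by
  let f : ℝ → ℝ := fun t ↦ (conj w * exp (t * I) - exp (t * I) ^ 3).im
  have hanti : Function.Antiperiodic f π := fun t ↦ by
    simp only [f, ofReal_add, add_mul, exp_add_pi_mul_I, ← neg_im]
    ring_nf
  obtain ⟨t, ht⟩ := exists_eq_zero_of_antiperiodic (by fun_prop) hanti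
  exact ⟨exp (t * I), norm_exp_ofReal_mul_I t, ht⟩

theorem cubicDisc_eq_mul_of_eq_ofReal {w q : ℂ} {r : ℝ} (hq : ‖q‖ = 1) (hr : conj w * q - q ^ 3 = r) :
    cubicDisc w = (2 * (q ^ 3).re - r) ^ 2 * (r ^ 2 - 4) := by
  have hq0 : q ≠ 0 := norm_ne_zero_iff.1 (by simp [hq])
  have hqc : conj q = q⁻¹ := (inv_eq_conj hq).symm
  have hw' : conj w = q⁻¹ * r + q ^ 2 := by
    field_simp
    linear_combination hr
  have hw : w = q * r + q⁻¹ ^ 2 := by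
    simpa [hqc] using congrArg conj hw'
  have hre : ((q ^ 3).re : ℂ) = (q ^ 3 + q⁻¹ ^ 3) / 2 := by
    rw [← hqc, ← map_pow, add_conj]
    push_cast
    ring
  apply ofReal_injective
  push_cast
  rw [ofReal_cubicDisc, hre, hw', hw]
  field_simp
  ring

theorem cubic_eq_prod_of_eq_ofReal {w q x y : ℂ} {r : ℝ} (hq : ‖q‖ = 1)
    (hr : conj w * q - q ^ 3 = r) (hxy : x + y = r) (hxy' : x * y = 1) (ζ : ℂ) :
    ζ ^ 3 - conj w * ζ ^ 2 + w * ζ - 1 = (ζ - q ^ 2) * (ζ - conj q * x) * (ζ - conj q * y) := by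
  have hqq : q * conj q = 1 := by simp [mul_conj, normSq_eq_norm_sq, hq]
  have hr' : w * conj q - conj q ^ 3 = r := by simpa using congrArg conj hr
  refine (cubic_eq_prod_iff _ _ _ _ _ _).2 ⟨?_, ?_, ?_⟩ ζ
  · linear_combination conj q * hxy - conj q * hr + (conj w - q ^ 2) * hqq
  · linear_combination q ^ 2 * conj q * hxy + conj q ^ 2 * hxy'
      + (q * r + w - conj q ^ 2) * hqq - q * hr'
  · linear_combination q ^ 2 * conj q ^ 2 * hxy' + (q * conj q + 1) * hqq

theorem exists_roots_norm_eq_one_of_cubicDisc_nonpos {w : ℂ} (hw : cubicDisc w ≤ 0) :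
    ∃ z₀ z₁ z₂ : ℂ, ‖z₀‖ = 1 ∧ ‖z₁‖ = 1 ∧ ‖z₂‖ = 1 ∧
      ∀ ζ, ζ ^ 3 - conj w * ζ ^ 2 + w * ζ - 1 = (ζ - z₀) * (ζ - z₁) * (ζ - z₂) := by
  obtain ⟨q, hq, him⟩ := exists_norm_eq_one_im_eq_zero w
  set r := (conj w * q - q ^ 3).re
  have hr : conj w * q - q ^ 3 = r := Complex.ext rfl (by simp [him])
  have hr2 : |r| ≤ 2 := by
    rcases eq_or_ne r (2 * (q ^ 3).re) with h | h
    · rw [h, abs_mul, abs_two]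
      have := abs_re_le_norm (q ^ 3)
      simp only [norm_pow, hq, one_pow] at this
      linarith
    · rw [cubicDisc_eq_mul_of_eq_ofReal hq hr] at hw
      have h4 := nonpos_of_mul_nonpos_right hw (sq_pos_iff.2 (sub_ne_zero.2 h.symm))
      exact abs_le_of_sq_le_sq (by linarith) zero_le_two
  obtain ⟨x, y, hx, hy, hxy, hxy'⟩ := exists_norm_eq_one_add_eq_mul_eq_one hr2
  exact ⟨q ^ 2, conj q * x, conj q * y, by simp [hq], by simp [hq, hx], by simp [hq, hy],
    cubic_eq_prod_of_eq_ofReal hq hr hxy hxy'⟩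

theorem exists_roots_norm_eq_one_iff_cubicDisc_nonpos (w : ℂ) :
    (∃ z₀ z₁ z₂ : ℂ, ‖z₀‖ = 1 ∧ ‖z₁‖ = 1 ∧ ‖z₂‖ = 1 ∧
      ∀ ζ, ζ ^ 3 - conj w * ζ ^ 2 + w * ζ - 1 = (ζ - z₀) * (ζ - z₁) * (ζ - z₂)) ↔
      cubicDisc w ≤ 0 := by
  refine ⟨fun ⟨z₀, z₁, z₂, h₀, h₁, h₂, h⟩ ↦ ?_, exists_roots_norm_eq_one_of_cubicDisc_nonpos⟩
  obtain ⟨e₁, e₂, e₃⟩ := (cubic_eq_prod_iff _ _ _ _ _ _).1 h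
  exact cubicDisc_nonpos_of_norm_eq_one h₀ h₁ h₂ e₁ e₂ e₃

noncomputable def deltoid (φ : ℝ) : ℂ :=
  2 * exp (-(I * φ)) + exp (2 * I * φ)

theorem cubicDisc_deltoid (φ : ℝ) : cubicDisc (deltoid φ) = 0 := by
  set e := exp (φ * I)
  have he : conj e = e⁻¹ := (inv_eq_conj (norm_exp_ofReal_mul_I φ)).symm
  have hd : deltoid φ = 2 * e⁻¹ + e ^ 2 := by
    simp only [deltoid, e, ← exp_neg, ← exp_nat_mul]
    ring_nf
  have hne : e ≠ 0 := exp_ne_zero _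
  have h := ofReal_cubicDisc_eq_sq (w := deltoid φ) (α := e) (β := e) (γ := e⁻¹ ^ 2)
    (by simp only [hd, map_add, map_mul, map_pow, map_inv₀, he, map_ofNat, inv_inv]; ring)
    (by rw [hd]; field_simp; ring) (by field_simp)
  rw [sub_self, zero_mul, zero_mul, zero_pow two_ne_zero] at h
  exact_mod_cast h

theorem cubicDisc_ofReal_mul (s : ℝ) (w : ℂ) :
    cubicDisc (s * w) =
      s ^ 3 * cubicDisc w + (s - 1) * (s * (normSq w * s - 9) ^ 2 + 27 * (s - 1) ^ 2) := by
  simp only [cubicDisc, normSq_mul, normSq_ofReal, mul_pow, ← ofReal_pow, re_ofReal_mul]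
  ring

theorem cubicDisc_ofReal_mul_deltoid_nonpos_iff {s : ℝ} (hs : 0 ≤ s) (φ : ℝ) :
    cubicDisc (s * deltoid φ) ≤ 0 ↔ s ≤ 1 := by
  rw [cubicDisc_ofReal_mul, cubicDisc_deltoid, mul_zero, zero_add]
  constructor
  · intro h
    by_contra! hs₁
    have hs₁' := sub_pos.2 hs₁
    exact (mul_pos hs₁' (by positivity)).not_ge h
  · intro hs₁
    exact mul_nonpos_of_nonpos_of_nonneg (by linarith) (by positivity)

theorem exists_two_exp_add_mul_exp_eq_ofReal {ν : ℂ} (hν : ‖ν‖ ≤ 1) :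
    ∃ ψ ρ : ℝ, 0 < ρ ∧ 2 * exp (↑(-ψ) * I) + ν * exp (↑(2 * ψ) * I) = ρ := by
  let g : ℝ → ℂ := fun ψ ↦ 2 * exp (↑(-ψ) * I) + ν * exp (↑(2 * ψ) * I)
  have hν' (ψ : ℝ) : ‖ν * exp (↑(2 * ψ) * I)‖ ≤ 1 := by
    rwa [norm_mul, norm_exp_ofReal_mul_I, mul_one]
  have him (ψ : ℝ) : (g ψ).im = -2 * Real.sin ψ + (ν * exp (↑(2 * ψ) * I)).im := by
    rw [add_im, mul_im]
    simp only [re_ofNat, im_ofNat, zero_mul, add_zero, exp_ofReal_mul_I_im, Real.sin_neg]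
    ring
  have hre (ψ : ℝ) : (g ψ).re = 2 * Real.cos ψ + (ν * exp (↑(2 * ψ) * I)).re := by
    rw [add_re, mul_re]
    simp only [re_ofNat, im_ofNat, zero_mul, sub_zero, exp_ofReal_mul_I_re, Real.cos_neg]
  have hsqrt : 1 < √3 := by
    rw [Real.lt_sqrt zero_le_one]; norm_num
  -- at `ψ = ∓π/3` the term `-2 sin ψ = ±√3` dominates the imaginary part
  have h0 : (0 : ℝ) ∈ Icc (g (π / 3)).im (g (-(π / 3))).im := by
    have hp := abs_le.1 ((abs_im_le_norm _).trans (hν' (π / 3)))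
    have hm := abs_le.1 ((abs_im_le_norm _).trans (hν' (-(π / 3))))
    rw [him, him, Real.sin_neg, Real.sin_pi_div_three]
    constructor <;> linarith
  obtain ⟨ψ, hψ, hψ₀⟩ := intermediate_value_Icc' (by linarith [Real.pi_pos])
    ((show Continuous fun ψ ↦ (g ψ).im by fun_prop).continuousOn) h0
  have hρ : g ψ = (g ψ).re := Complex.ext rfl (by simpa using hψ₀)
  have hcos : 1 / 2 ≤ Real.cos ψ := by
    rw [← Real.cos_pi_div_three, ← Real.cos_abs ψ]
    exact Real.cos_le_cos_of_nonneg_of_le_pi (abs_nonneg ψ) (by linarith [Real.pi_pos])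
      (abs_le.2 ⟨by linarith [hψ.1], by linarith [hψ.2]⟩)
  have hρ₀ : 0 ≤ (g ψ).re := by
    have := neg_abs_le (ν * exp (↑(2 * ψ) * I)).re
    have := (abs_re_le_norm _).trans (hν' ψ)
    rw [hre]
    linarith
  refine ⟨ψ, (g ψ).re, hρ₀.lt_of_ne fun h ↦ ?_, hρ⟩
  rw [← h, ofReal_zero] at hρ
  have := congrArg norm (eq_neg_of_add_eq_zero_left hρ)
  rw [norm_neg, norm_mul, norm_exp_ofReal_mul_I, mul_one, Complex.norm_two] at this
  linarith [hν' ψ]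

theorem exists_eq_ofReal_mul_deltoid (w : ℂ) : ∃ s : ℝ, 0 ≤ s ∧ ∃ φ, w = s * deltoid φ := by
  obtain ⟨ψ, ρ, hρ, h⟩ :=
    exists_two_exp_add_mul_exp_eq_ofReal (norm_exp_ofReal_mul_I (-3 * arg w)).le
  refine ⟨‖w‖ / ρ, by positivity, ψ - arg w, ?_⟩
  have hd : deltoid (ψ - arg w) = ρ * exp (arg w * I) := by
    rw [← h, add_mul, mul_assoc, mul_assoc, ← exp_add, ← exp_add, ← exp_add]
    simp only [deltoid]
    push_cast
    ring_nf
  rw [hd, ofReal_div, ← mul_assoc, div_mul_cancel₀ _ (ofReal_ne_zero.2 hρ.ne'),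
    norm_mul_exp_arg_mul_I]

theorem mem_regionU_iff_cubicDisc_nonpos (u : ℂ) : u ∈ regionU ↔ cubicDisc (u / 6) ≤ 0 := by
  constructor
  · rintro ⟨s, ⟨hs₀, hs₁⟩, φ, rfl⟩
    change cubicDisc (6 * s * deltoid φ / 6) ≤ 0
    rw [show 6 * (s : ℂ) * deltoid φ / 6 = s * deltoid φ by ring]
    exact (cubicDisc_ofReal_mul_deltoid_nonpos_iff hs₀ φ).2 hs₁
  · intro h
    obtain ⟨s, hs, φ, hu⟩ := exists_eq_ofReal_mul_deltoid (u / 6)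
    rw [hu, cubicDisc_ofReal_mul_deltoid_nonpos_iff hs] at h
    refine ⟨s, ⟨hs, h⟩, φ, ?_⟩
    change u = 6 * s * deltoid φ
    linear_combination 6 * hu

theorem stmt5 (u : ℂ) :
    (∃ z₀ z₁ z₂ : ℂ, ‖z₀‖ = 1 ∧ ‖z₁‖ = 1 ∧ ‖z₂‖ = 1 ∧
        ∀ ζ : ℂ, Rcubic u ζ = (ζ - z₀) * (ζ - z₁) * (ζ - z₂))
      ↔ u ∈ regionU := by
  have hR (ζ : ℂ) : Rcubic u ζ = ζ ^ 3 - conj (u / 6) * ζ ^ 2 + u / 6 * ζ - 1 := by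
    rw [Rcubic, map_div₀, map_ofNat]
  simp only [hR]
  rw [exists_roots_norm_eq_one_iff_cubicDisc_nonpos, mem_regionU_iff_cubicDisc_nonpos]
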